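/- Suppose gcd(m/i, n/j) = t and ν has a generating sequence Q_0 = X, Q_1 = Y, Q_2, … in which every Q_l is an eigenfunction for H_{i,j,t,x}. Let ν̄ be the restriction of ν to the quotient field Q(A_{i,j,t,x}) of A_{i,j,t,x}. Then ν̄ does not split in R_𝔪: ν is the unique valuation of K(X,Y) extending ν̄. -/

import Mathlib

open MvPolynomial Finset Pointwise

noncomputable section

namespace DuttaPaper

/-- The polynomial ring `K[X,Y]`, with `X = X 0` and `Y = X 1`. -/
abbrev Poly (K : Type) [Field K] : Type := MvPolynomial (Fin 2) K

/-- The rational function field `K(X,Y)`. -/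
abbrev RF (K : Type) [Field K] : Type := FractionRing (Poly K)

variable {K : Type} [Field K]

/-- The `K`-algebra endomorphism of `K[X,Y]` sending `X ↦ u • X`, `Y ↦ v • Y`;
this is the action of `(u,v) ∈ 𝕌_m × 𝕌_n` on `K[X,Y]`. -/
def act (u v : K) : Poly K →ₐ[K] Poly K :=
  MvPolynomial.aeval ![MvPolynomial.C u * MvPolynomial.X 0,
    MvPolynomial.C v * MvPolynomial.X 1]

/-- Membership in the set `H_{i,j,t,x} = {(α^{a i}, β^{b j}) : b ≡ a x (mod t)} ⊆ K × K`. -/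
def Hmem (α β : K) (i j t x : ℕ) (p : K × K) : Prop :=
  ∃ a b : ℤ, b ≡ a * (x : ℤ) [ZMOD (t : ℤ)] ∧
    p = (α ^ (a * (i : ℤ)), β ^ (b * (j : ℤ)))

/-- `f ∈ K[X,Y]` is an eigenfunction for `H_{i,j,t,x}`. -/
def IsEigen (α β : K) (i j t x : ℕ) (f : Poly K) : Prop :=
  ∀ p : K × K, Hmem α β i j t x p → ∃ lam : K, act p.1 p.2 f = lam • f

/-- `f ∈ K[X,Y]` belongs to the invariant ring `A_{i,j,t,x} = K[X,Y]^{H_{i,j,t,x}}`. -/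
def Invariant (α β : K) (i j t x : ℕ) (f : Poly K) : Prop :=
  ∀ p : K × K, Hmem α β i j t x p → act p.1 p.2 f = f

/-- A `ℚ`-valued (rational rank 1) valuation on a field `L`: the data of the values of the
nonzero elements (the value of `0` is irrelevant). -/
structure RatVal (L : Type) [Field L] where
  v : L → ℚ
  v_mul : ∀ a b : L, a ≠ 0 → b ≠ 0 → v (a * b) = v a + v b
  v_add : ∀ a b : L, a ≠ 0 → b ≠ 0 → a + b ≠ 0 → min (v a) (v b) ≤ v (a + b)

/-- Value of a polynomial under a valuation of `K(X,Y)`. -/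
def vP (ν : RatVal (RF K)) (f : Poly K) : ℚ :=
  ν.v (algebraMap (Poly K) (RF K) f)

/-- `ν` dominates `R_𝔪 = K[X,Y]_{(X,Y)}` : `ν ≥ 0` on `R_𝔪` and `ν > 0` on its maximal
ideal (expressed on the level of polynomials). -/
def DominatesRm (ν : RatVal (RF K)) : Prop :=
  (∀ f : Poly K, f ≠ 0 → 0 ≤ vP ν f) ∧
  (∀ f : Poly K, f ≠ 0 → MvPolynomial.constantCoeff f = 0 → 0 < vP ν f)

/-- `ν` is non-discrete: its value group is not a cyclic subgroup of `ℚ`. -/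
def Nondiscrete (ν : RatVal (RF K)) : Prop :=
  ¬ ∃ g : ℚ, ∀ z : RF K, z ≠ 0 → ∃ k : ℤ, ν.v z = (k : ℚ) * g

/-- Data of a candidate generating sequence: the polynomials `Q_l` and the numbers `m̄_l`. -/
structure GSData (K : Type) [Field K] where
  Q : ℕ → Poly K
  mbar : ℕ → ℕ

/-- `γ_l = ν(Q_l)`. -/
def GSData.γ (G : GSData K) (ν : RatVal (RF K)) (l : ℕ) : ℚ := vP ν (G.Q l)

/-- `d(l) = m̄_1 ⋯ m̄_{l-1}` (so `d(1) = 1`). -/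
def GSData.d (G : GSData K) (l : ℕ) : ℕ := ∏ k ∈ Finset.Icc 1 (l - 1), G.mbar k

/-- An exponent vector `e` is admissible when `e k < m̄_k` for all `k ≥ 1`. -/
def Adm (G : GSData K) (e : ℕ →₀ ℕ) : Prop := ∀ k, 1 ≤ k → e k < G.mbar k

/-- The monomial `X^{e 0} Q_1^{e 1} Q_2^{e 2} ⋯` in the generating sequence. -/
def Pmon (G : GSData K) (e : ℕ →₀ ℕ) : Poly K := e.prod fun k a => G.Q k ^ a

/-- The value `Σ_k e k • γ_k` of such a monomial. -/
def evalγ (ν : RatVal (RF K)) (G : GSData K) (e : ℕ →₀ ℕ) : ℚ :=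
  e.sum fun k a => (a : ℚ) * G.γ ν k

/-- `(Q_l)_{l≥0}` is a generating sequence for `ν` in `K[X,Y]` (properties (1)–(4) of
Section 2 of the paper, for the algorithm of Cutkosky–Vinh). -/
structure IsGenSeq (ν : RatVal (RF K)) (G : GSData K) : Prop where
  hQ0 : G.Q 0 = MvPolynomial.X 0
  hQ1 : G.Q 1 = MvPolynomial.X 1
  /-- `m̄_l ≥ 1`. -/
  hmbar_pos : ∀ l, 1 ≤ l → 0 < G.mbar l
  /-- `m̄_l γ_l ∈ G(γ_0, …, γ_{l-1})`. -/
  hmbar_mem : ∀ l, 1 ≤ l → ∃ c : ℕ → ℤ,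
      (G.mbar l : ℚ) * G.γ ν l = ∑ k ∈ Finset.range l, (c k : ℚ) * G.γ ν k
  /-- `m̄_l` is minimal with this property. -/
  hmbar_min : ∀ l, 1 ≤ l → ∀ q : ℕ, 0 < q →
      (∃ c : ℕ → ℤ, (q : ℚ) * G.γ ν l = ∑ k ∈ Finset.range l, (c k : ℚ) * G.γ ν k) →
      G.mbar l ≤ q
  /-- (1) `γ_{l+1} > m̄_l γ_l`. -/
  hgrowth : ∀ l, 1 ≤ l → (G.mbar l : ℚ) * G.γ ν l < G.γ ν (l + 1)
  /-- (2) `Q_l = Y^{d(l)} + (terms of lower Y-degree)`. -/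
  hmonic : ∀ l, 1 ≤ l →
      G.Q l - MvPolynomial.X 1 ^ G.d l = 0 ∨
      MvPolynomial.degreeOf 1 (G.Q l - MvPolynomial.X 1 ^ G.d l) < G.d l
  /-- (3), existence and uniqueness of the expansion of any nonzero `f` in terms of the
  admissible monomials `X^{e 0} Q_1^{e 1} ⋯ Q_r^{e r}`, `e k < m̄_k` for `k ≥ 1`. -/
  hexpand : ∀ f : Poly K, f ≠ 0 →
      ∃! c : (ℕ →₀ ℕ) →₀ K,
        (∀ e ∈ c.support, Adm G e) ∧
        f = c.sum fun e a => MvPolynomial.C a * Pmon G e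
  /-- (3), the nonzero terms of the expansion have pairwise distinct values and
  `ν(f)` is the minimum of those values. -/
  hval : ∀ f : Poly K, f ≠ 0 → ∀ c : (ℕ →₀ ℕ) →₀ K,
      (∀ e ∈ c.support, Adm G e) →
      f = (c.sum fun e a => MvPolynomial.C a * Pmon G e) →
      (∀ e ∈ c.support, ∀ e' ∈ c.support, evalγ ν G e = evalγ ν G e' → e = e') ∧
      ∃ e₀ ∈ c.support, vP ν f = evalγ ν G e₀ ∧
        ∀ e ∈ c.support, evalγ ν G e₀ ≤ evalγ ν G e
  /-- (4) `Q_{l+1} = Q_l^{m̄_l} - λ_l X^{c_0} Y^{c_1} Q_2^{c_2} ⋯ Q_{l-1}^{c_{l-1}}` with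
  `0 ≤ c_k < m̄_k` for `k ≥ 1` and `m̄_l γ_l = Σ_{k<l} c_k γ_k`. -/
  hrec : ∀ l, 1 ≤ l → ∃ lam : K, lam ≠ 0 ∧ ∃ cc : ℕ → ℕ,
      (∀ k, 1 ≤ k → k < l → cc k < G.mbar k) ∧
      G.Q (l + 1) =
        G.Q l ^ G.mbar l - MvPolynomial.C lam * ∏ k ∈ Finset.range l, G.Q k ^ cc k ∧
      (G.mbar l : ℚ) * G.γ ν l = ∑ k ∈ Finset.range l, (cc k : ℚ) * G.γ ν k

/-- The valuation semigroup `S^{R_𝔪}(ν) = {ν(h) : 0 ≠ h ∈ R_𝔪}`. -/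
def SRm (ν : RatVal (RF K)) : Set ℚ :=
  {q | ∃ f g : Poly K, f ≠ 0 ∧ MvPolynomial.constantCoeff g ≠ 0 ∧
    q = vP ν f - vP ν g}

/-- The valuation semigroup `S^{(A_{i,j,t,x})_𝔫}(ν)` of the invariant ring localized at
`𝔫 = (X,Y) ∩ A_{i,j,t,x}`. -/
def SA (ν : RatVal (RF K)) (α β : K) (i j t x : ℕ) : Set ℚ :=
  {q | ∃ f g : Poly K, f ≠ 0 ∧ Invariant α β i j t x f ∧ Invariant α β i j t x g ∧
    MvPolynomial.constantCoeff g ≠ 0 ∧ q = vP ν f - vP ν g}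

/-- `S` is a finitely generated module over the subsemigroup `T`:
`S = {s_1, …, s_k} + T` for finitely many `s_i ∈ S`. -/
def FGover (S T : Set ℚ) : Prop :=
  ∃ F : Finset ℚ, (F : Set ℚ) ⊆ S ∧ S = (F : Set ℚ) + T

/-! Write `ω` for a valuation agreeing with `ν` on the nonzero invariants. A power `Q_l ^ (m n)`
of an eigenfunction is invariant, so `ω(Q_l) = ν(Q_l)`; nonzero constants are invariant units of
`R_𝔪`, so `ω` and `ν` vanish on them. Every polynomial is a sum of terms `c • X^{e_0} Q_1^{e_1} ⋯`
whose `ν`-values are pairwise distinct, hence whose `ω`-values are too; both `ω` and `ν` of the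
sum are then the value of its minimal term. Agreement on `K[X,Y]` gives agreement on `K(X,Y)`. -/

namespace RatVal

variable {L : Type} [Field L] (w : RatVal L)

lemma v_one : w.v 1 = 0 := by
  have := w.v_mul 1 1 one_ne_zero one_ne_zero
  rw [mul_one] at this
  linarith

lemma v_inv {a : L} (ha : a ≠ 0) : w.v a⁻¹ = -w.v a := by
  have := w.v_mul a a⁻¹ ha (inv_ne_zero ha)
  rw [mul_inv_cancel₀ ha, v_one] at this
  linarith

lemma v_div {a b : L} (ha : a ≠ 0) (hb : b ≠ 0) : w.v (a / b) = w.v a - w.v b := by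
  rw [div_eq_mul_inv, w.v_mul _ _ ha (inv_ne_zero hb), v_inv w hb, sub_eq_add_neg]

lemma v_neg {a : L} (ha : a ≠ 0) : w.v (-a) = w.v a := by
  have h : w.v (-1 : L) = 0 := by
    have := w.v_mul (-1) (-1) (neg_ne_zero.2 one_ne_zero) (neg_ne_zero.2 one_ne_zero)
    rw [neg_mul_neg, one_mul, v_one] at this
    linarith
  rw [← neg_one_mul, w.v_mul _ _ (neg_ne_zero.2 one_ne_zero) ha, h, zero_add]

lemma v_pow {a : L} (ha : a ≠ 0) (k : ℕ) : w.v (a ^ k) = k * w.v a := by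
  induction k with
  | zero => simp [v_one]
  | succ k ih =>
    rw [pow_succ, w.v_mul _ _ (pow_ne_zero _ ha) ha, ih]
    push_cast
    ring

lemma v_prod {ι : Type*} (s : Finset ι) (b : ι → L) (hb : ∀ i ∈ s, b i ≠ 0) :
    w.v (∏ i ∈ s, b i) = ∑ i ∈ s, w.v (b i) := by
  induction s using Finset.cons_induction with
  | empty => simpa using v_one w
  | cons a s ha ih =>
    have hs : ∀ i ∈ s, b i ≠ 0 := fun i hi => hb i (mem_cons_of_mem hi)
    rw [prod_cons, sum_cons, w.v_mul _ _ (hb a (mem_cons_self a s)) (prod_ne_zero_iff.2 hs),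
      ih hs]

lemma v_eq_zero_of_mul_eq_one {a b : L} (hab : a * b = 1) (ha : 0 ≤ w.v a) (hb : 0 ≤ w.v b) :
    w.v a = 0 := by
  have := w.v_mul a b (left_ne_zero_of_mul_eq_one hab) (right_ne_zero_of_mul_eq_one hab)
  rw [hab, v_one] at this
  linarith

lemma v_eq_of_v_pow_eq (w' : RatVal L) {a : L} (ha : a ≠ 0) {k : ℕ} (hk : 0 < k)
    (h : w.v (a ^ k) = w'.v (a ^ k)) : w.v a = w'.v a := by
  rw [v_pow w ha, v_pow w' ha] at h
  exact mul_left_cancel₀ (Nat.cast_ne_zero.2 hk.ne') h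

lemma v_add_of_lt {a b : L} (ha : a ≠ 0) (hb : b ≠ 0) (hlt : w.v a < w.v b) :
    a + b ≠ 0 ∧ w.v (a + b) = w.v a := by
  have hab : a + b ≠ 0 := by
    intro h
    rw [eq_neg_of_add_eq_zero_right h, v_neg w ha] at hlt
    exact lt_irrefl _ hlt
  have hle : w.v a ≤ w.v (a + b) := by
    simpa [min_eq_left hlt.le] using w.v_add a b ha hb hab
  have hge := w.v_add (a + b) (-b) hab (neg_ne_zero.2 hb) (by simpa using ha)
  rw [add_neg_cancel_right, v_neg w hb] at hge
  refine ⟨hab, le_antisymm ?_ hle⟩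
  rcases min_le_iff.1 hge with h | h
  · exact h
  · exact absurd hlt (not_lt.2 h)

lemma lt_v_sum {ι : Type*} (s : Finset ι) (g : ι → L) {q : ℚ} (hg : ∀ i ∈ s, g i ≠ 0)
    (hq : ∀ i ∈ s, q < w.v (g i)) (hs : ∑ i ∈ s, g i ≠ 0) : q < w.v (∑ i ∈ s, g i) := by
  induction s using Finset.cons_induction with
  | empty => simp at hs
  | cons a s ha ih =>
    rw [sum_cons] at hs ⊢
    have hqa := hq a (mem_cons_self a s)
    by_cases hrest : ∑ i ∈ s, g i = 0
    · rwa [hrest, add_zero]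
    · have hrest_lt := ih (fun i hi => hg i (mem_cons_of_mem hi))
        (fun i hi => hq i (mem_cons_of_mem hi)) hrest
      exact (lt_min hqa hrest_lt).trans_le (w.v_add _ _ (hg a (mem_cons_self a s)) hrest hs)

lemma v_sum_of_lt {ι : Type*} [DecidableEq ι] (s : Finset ι) (g : ι → L) {i₀ : ι} (hi₀ : i₀ ∈ s)
    (hg : ∀ i ∈ s, g i ≠ 0) (hmin : ∀ i ∈ s, i ≠ i₀ → w.v (g i₀) < w.v (g i)) :
    w.v (∑ i ∈ s, g i) = w.v (g i₀) := by
  rw [← add_sum_erase s g hi₀]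
  by_cases hrest : ∑ i ∈ s.erase i₀, g i = 0
  · rw [hrest, add_zero]
  · refine (v_add_of_lt w (hg i₀ hi₀) hrest (lt_v_sum w _ _ ?_ ?_ hrest)).2
    · exact fun i hi => hg i (mem_of_mem_erase hi)
    · exact fun i hi => hmin i (mem_of_mem_erase hi) (ne_of_mem_erase hi)

lemma eq_of_eq_on_algebraMap {R : Type*} [CommRing R] [IsDomain R] [Algebra R L]
    [IsFractionRing R L] (w' : RatVal L)
    (h : ∀ r : R, r ≠ 0 → w.v (algebraMap R L r) = w'.v (algebraMap R L r))
    {z : L} (hz : z ≠ 0) : w.v z = w'.v z := by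
  obtain ⟨a, b, hb, rfl⟩ := IsFractionRing.div_surjective (A := R) z
  have hinj := IsFractionRing.injective R L
  have hb0 : b ≠ 0 := nonZeroDivisors.ne_zero hb
  have ha0 : a ≠ 0 := by
    rintro rfl
    simp at hz
  have ha' := (map_ne_zero_iff _ hinj).2 ha0
  have hb' := (map_ne_zero_iff _ hinj).2 hb0
  rw [v_div w ha' hb', v_div w' ha' hb', h a ha0, h b hb0]

end RatVal

section Action

variable {K : Type} [Field K]

lemma act_act (u v u' v' : K) (f : Poly K) :
    act u v (act u' v' f) = act (u * u') (v * v') f := by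
  have h : (act u v).comp (act u' v') = act (u * u') (v * v') := by
    apply algHom_ext
    intro b
    fin_cases b <;> simp [act, mul_left_comm, mul_assoc]
  exact AlgHom.congr_fun h f

lemma act_one (f : Poly K) : act (1 : K) 1 f = f := by
  have h : act (1 : K) 1 = AlgHom.id K (Poly K) := by
    apply algHom_ext
    intro b
    fin_cases b <;> simp [act]
  exact AlgHom.congr_fun h f

lemma invariant_C (α β : K) (i j t x : ℕ) (a : K) :
    Invariant α β i j t x (C a) := fun p _ => (act p.1 p.2).commutes a

lemma act_pow_of_eq_smul {u v lam : K} {f : Poly K} (hf : act u v f = lam • f) (k : ℕ) :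
    act (u ^ k) (v ^ k) f = lam ^ k • f := by
  induction k with
  | zero => simpa using act_one f
  | succ k ih =>
    rw [pow_succ, pow_succ, ← act_act, hf, map_smul, ih, smul_smul, pow_succ']

lemma Hmem.pow_eq_one {α β : K} {i j t x m n : ℕ} (hα : α ^ m = 1) (hβ : β ^ n = 1)
    {p : K × K} (hp : Hmem α β i j t x p) : p.1 ^ m = 1 ∧ p.2 ^ n = 1 := by
  obtain ⟨a, b, -, rfl⟩ := hp
  constructor
  · rw [← zpow_natCast, ← zpow_mul, mul_comm, zpow_mul, zpow_natCast, hα, one_zpow]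
  · rw [← zpow_natCast, ← zpow_mul, mul_comm, zpow_mul, zpow_natCast, hβ, one_zpow]

/-- The eigenvalue of `p ∈ H` is an `(m n)`-th root of unity, since `p ^ (m n) = 1`. -/
lemma IsEigen.invariant_pow {α β : K} {i j t x m n : ℕ} (hα : α ^ m = 1) (hβ : β ^ n = 1)
    {f : Poly K} (hf : f ≠ 0) (he : IsEigen α β i j t x f) :
    Invariant α β i j t x (f ^ (m * n)) := by
  intro p hp
  obtain ⟨lam, hlam⟩ := he p hp
  obtain ⟨hp1, hp2⟩ := hp.pow_eq_one hα hβ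
  have hroot : lam ^ (m * n) = 1 := by
    have h := act_pow_of_eq_smul hlam (m * n)
    rw [pow_mul, hp1, one_pow, pow_mul', hp2, one_pow, act_one] at h
    exact smul_left_injective K hf (by simpa using h.symm)
  rw [map_pow, hlam, smul_pow, hroot, one_smul]

end Action

lemma vP_mul {K : Type} [Field K] (ω : RatVal (RF K)) {f g : Poly K} (hf : f ≠ 0) (hg : g ≠ 0) :
    vP ω (f * g) = vP ω f + vP ω g := by
  have hinj := IsFractionRing.injective (Poly K) (RF K)
  rw [vP, map_mul, ω.v_mul _ _ ((map_ne_zero_iff _ hinj).2 hf) ((map_ne_zero_iff _ hinj).2 hg)]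
  rfl

lemma DominatesRm.vP_C {K : Type} [Field K] {ν : RatVal (RF K)} (hdom : DominatesRm ν)
    {a : K} (ha : a ≠ 0) : vP ν (C a) = 0 := by
  refine ν.v_eq_zero_of_mul_eq_one (b := algebraMap (Poly K) (RF K) (C a⁻¹)) ?_
    (hdom.1 _ (C_ne_zero.2 ha)) (hdom.1 _ (C_ne_zero.2 (inv_ne_zero ha)))
  rw [← map_mul, ← map_mul, mul_inv_cancel₀ ha, map_one, map_one]

namespace IsGenSeq

variable {K : Type} [Field K] {ν : RatVal (RF K)} {G : GSData K}

lemma Q_ne_zero (hG : IsGenSeq ν G) (l : ℕ) : G.Q l ≠ 0 := by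
  rcases Nat.eq_zero_or_pos l with rfl | hl
  · rw [hG.hQ0]
    exact X_ne_zero 0
  intro h0
  have hd : 0 < G.d l := prod_pos fun k hk => hG.hmbar_pos k (mem_Icc.1 hk).1
  have hXd : degreeOf 1 (-(X 1 ^ G.d l) : Poly K) = G.d l := by
    rw [degreeOf_neg, degreeOf_X_self_pow]
  rcases hG.hmonic l hl with h | h <;> rw [h0, zero_sub] at h
  · exact pow_ne_zero _ (X_ne_zero 1) (neg_eq_zero.1 h)
  · omega

lemma Pmon_ne_zero (hG : IsGenSeq ν G) (e : ℕ →₀ ℕ) : Pmon G e ≠ 0 :=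
  prod_ne_zero_iff.2 fun k _ => pow_ne_zero _ (hG.Q_ne_zero k)

variable {ω : RatVal (RF K)}

lemma vP_Pmon (hG : IsGenSeq ν G) (hQ : ∀ l, vP ω (G.Q l) = vP ν (G.Q l)) (e : ℕ →₀ ℕ) :
    vP ω (Pmon G e) = evalγ ν G e := by
  have hQ' : ∀ k, algebraMap (Poly K) (RF K) (G.Q k) ≠ 0 := fun k =>
    (map_ne_zero_iff _ (IsFractionRing.injective _ _)).2 (hG.Q_ne_zero k)
  rw [vP, Pmon, Finsupp.prod, map_prod,
    ω.v_prod _ _ fun k _ => by rw [map_pow]; exact pow_ne_zero _ (hQ' k)]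
  refine sum_congr rfl fun k _ => ?_
  rw [map_pow, ω.v_pow (hQ' k)]
  exact congrArg _ (hQ k)

lemma vP_eq_of_eq_on_Q (hG : IsGenSeq ν G) (hQ : ∀ l, vP ω (G.Q l) = vP ν (G.Q l))
    (hC : ∀ a : K, a ≠ 0 → vP ω (C a) = 0) {f : Poly K} (hf : f ≠ 0) : vP ω f = vP ν f := by
  classical
  obtain ⟨c, ⟨hadm, hsum⟩, -⟩ := hG.hexpand f hf
  obtain ⟨hdist, e₀, he₀, hνf, hmin⟩ := hG.hval f hf c hadm hsum
  set term : (ℕ →₀ ℕ) → RF K := fun e =>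
    algebraMap (Poly K) (RF K) (C (c e) * Pmon G e)
  have hinj := IsFractionRing.injective (Poly K) (RF K)
  have hterm_ne : ∀ e ∈ c.support, term e ≠ 0 := fun e he =>
    (map_ne_zero_iff _ hinj).2 <|
      mul_ne_zero (C_ne_zero.2 (Finsupp.mem_support_iff.1 he)) (hG.Pmon_ne_zero e)
  have hterm : ∀ e ∈ c.support, ω.v (term e) = evalγ ν G e := fun e he => by
    have hCe : (C (c e) : Poly K) ≠ 0 := C_ne_zero.2 (Finsupp.mem_support_iff.1 he)
    show vP ω (C (c e) * Pmon G e) = _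
    rw [vP_mul ω hCe (hG.Pmon_ne_zero e), hC _ (Finsupp.mem_support_iff.1 he), hG.vP_Pmon hQ,
      zero_add]
  have hlt : ∀ e ∈ c.support, e ≠ e₀ → ω.v (term e₀) < ω.v (term e) := fun e he hne => by
    rw [hterm e he, hterm e₀ he₀]
    exact (hmin e he).lt_of_ne fun h => hne (hdist e he e₀ he₀ h.symm)
  have hf_sum : algebraMap (Poly K) (RF K) f = ∑ e ∈ c.support, term e := by
    rw [hsum, Finsupp.sum, map_sum]
  rw [vP, hf_sum, ω.v_sum_of_lt _ _ he₀ hterm_ne hlt, hterm e₀ he₀, hνf]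

end IsGenSeq

theorem stmt_16_general (K : Type) [Field K]
    (m n : ℕ) (hm : 0 < m) (hn : 0 < n) (α β : K)
    (hα : IsPrimitiveRoot α m) (hβ : IsPrimitiveRoot β n)
    (i j t x : ℕ)
    (ν : RatVal (RF K)) (hdom : DominatesRm ν)
    (G : GSData K) (hG : IsGenSeq ν G)
    (heig : ∀ l, IsEigen α β i j t x (G.Q l)) :
    ∀ ω : RatVal (RF K),
      (∀ f : Poly K, f ≠ 0 → Invariant α β i j t x f →
        ω.v (algebraMap (Poly K) (RF K) f) = ν.v (algebraMap (Poly K) (RF K) f)) →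
      ∀ z : RF K, z ≠ 0 → ω.v z = ν.v z := by
  intro ω hω z hz
  have hQ : ∀ l, vP ω (G.Q l) = vP ν (G.Q l) := fun l => by
    have hQl := hG.Q_ne_zero l
    refine ω.v_eq_of_v_pow_eq ν ((map_ne_zero_iff _ (IsFractionRing.injective _ _)).2 hQl)
      (Nat.mul_pos hm hn) ?_
    rw [← map_pow]
    exact hω _ (pow_ne_zero _ hQl)
      ((heig l).invariant_pow hα.pow_eq_one hβ.pow_eq_one hQl)
  have hC : ∀ a : K, a ≠ 0 → vP ω (C a) = 0 := fun a ha =>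
    (hω _ (C_ne_zero.2 ha) (invariant_C α β i j t x a)).trans (hdom.vP_C ha)
  exact ω.eq_of_eq_on_algebraMap ν (fun f hf => hG.vP_eq_of_eq_on_Q hQ hC hf) hz

/-- the restriction `ν̄` of `ν` to the quotient field of the invariant
ring does not split: `ν` is the unique valuation of `K(X,Y)` extending `ν̄` (a
valuation agrees with `ν` on `Q(A)` iff it agrees on the nonzero invariants). -/
theorem stmt_16 (K : Type) [Field K] [IsAlgClosed K] [CharZero K]
    (m n : ℕ) (hm : 0 < m) (hn : 0 < n) (α β : K)
    (hα : IsPrimitiveRoot α m) (hβ : IsPrimitiveRoot β n)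
    (i j t x : ℕ) (hi : 0 < i) (hj : 0 < j) (ht : 0 < t)
    (him : i ∣ m) (hjn : j ∣ n) (hti : t ∣ m / i) (htj : t ∣ n / j)
    (hxt : Nat.gcd x t = 1) (hx1 : 1 ≤ x) (hxle : x ≤ t)
    (ν : RatVal (RF K)) (hdom : DominatesRm ν) (hnd : Nondiscrete ν)
    (G : GSData K) (hG : IsGenSeq ν G)
    (heig : ∀ l, IsEigen α β i j t x (G.Q l))
    (hgcd : Nat.gcd (m / i) (n / j) = t) :
    ∀ ω : RatVal (RF K),
      (∀ f : Poly K, f ≠ 0 → Invariant α β i j t x f →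
        ω.v (algebraMap (Poly K) (RF K) f) = ν.v (algebraMap (Poly K) (RF K) f)) →
      ∀ z : RF K, z ≠ 0 → ω.v z = ν.v z :=
  stmt_16_general K m n hm hn α β hα hβ i j t x ν hdom G hG heig

end DuttaPaper
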